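/- arXiv:1603.06087 — 2 statements merged into one kernel-verified Lean document; each statement's English description precedes it below -/
import Mathlib

section
/- Let p, m be integers with p ≥ 2 and p + 1 < m < 2p − 1. Then the set 𝒬′ has maximum 1/(p−1) and minimum −1/(p−1); that is, both values lie in 𝒬′, and every element x of 𝒬′ satisfies |x| ≤ 1/(p−1). -/
/-- The set `𝒜` of integer sequences `(a_k)_{k≥1}` (indexed here by `k : ℕ`, so `a k`
stands for `a_{k+1}`) with `|a_k| ≤ m - 1` and `∑_{k≥1} a_k p^{-k} = 1`. -/
def seqA (p m : ℤ) : Set (ℕ → ℤ) :=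
  {a | (∀ k, |a k| ≤ m - 1) ∧ HasSum (fun k => (a k : ℝ) * ((p : ℝ)⁻¹) ^ (k + 1)) 1}

/-- The set `ℬ` of integer sequences `(b_k)_{k≥1}` with `|b_k| ≤ m - 1` and
`∑_{k≥1} b_k p^{-k} = 0`. -/
def seqB (p m : ℤ) : Set (ℕ → ℤ) :=
  {b | (∀ k, |b k| ≤ m - 1) ∧ HasSum (fun k => (b k : ℝ) * ((p : ℝ)⁻¹) ^ (k + 1)) 0}

/-- `𝒮 = { ∑_{k≥1} a_k q^{-k} : (a_k) ∈ 𝒜 }`. -/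
def setS (p q m : ℤ) : Set ℝ :=
  {x | ∃ a ∈ seqA p m, HasSum (fun k => (a k : ℝ) * ((q : ℝ)⁻¹) ^ (k + 1)) x}

/-- `𝒮' = { ∑_{k≥1} k a_k p^{-k} : (a_k) ∈ 𝒜 }`. -/
def setS' (p m : ℤ) : Set ℝ :=
  {x | ∃ a ∈ seqA p m,
    HasSum (fun k => ((k + 1 : ℕ) : ℝ) * (a k : ℝ) * ((p : ℝ)⁻¹) ^ (k + 1)) x}

/-- `𝒬 = { ∑_{k≥1} b_k q^{-k} : (b_k) ∈ ℬ }`. -/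
def setQ (p q m : ℤ) : Set ℝ :=
  {x | ∃ b ∈ seqB p m, HasSum (fun k => (b k : ℝ) * ((q : ℝ)⁻¹) ^ (k + 1)) x}

/-- `𝒬' = { ∑_{k≥1} k b_k p^{-k} : (b_k) ∈ ℬ }`. -/
def setQ' (p m : ℤ) : Set ℝ :=
  {x | ∃ b ∈ seqB p m,
    HasSum (fun k => ((k + 1 : ℕ) : ℝ) * (b k : ℝ) * ((p : ℝ)⁻¹) ^ (k + 1)) x}


/-!
For `b ∈ ℬ` let `S n = ∑_{k ≤ n} b_k p^{-k}`. As the whole series vanishes, `-S n` is its tail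
after `n`, of absolute value at most `(m - 1)/(p - 1) · p^{-n} < 2 p^{-n}`; since `p^n S n` is
an integer, in fact `|S n| ≤ p^{-n}`. Summation by parts gives
`∑_{k ≥ 1} k b_k p^{-k} = -∑_{n ≥ 1} S n`, whose absolute value is therefore at most
`∑_{n ≥ 1} p^{-n} = 1/(p - 1)`. Equality is attained by `b = (-1, p - 1, p - 1, …)` and `-b`.
-/

open Finset Filter Topology

lemma hasSum_inv_pow_succ {P : ℝ} (hP : 1 < P) :
    HasSum (fun k : ℕ => P⁻¹ ^ (k + 1)) (P - 1)⁻¹ := by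
  have h :=
    (hasSum_geometric_of_lt_one (by positivity) (inv_lt_one_of_one_lt₀ hP)).mul_left P⁻¹
  have hP1 : P - 1 ≠ 0 := by linarith
  rw [show P⁻¹ * (1 - P⁻¹)⁻¹ = (P - 1)⁻¹ by field_simp] at h
  simpa only [← pow_succ'] using h

lemma hasSum_succ_mul_inv_pow_succ {P : ℝ} (hP : 1 < P) :
    HasSum (fun k : ℕ => ((k + 1 : ℕ) : ℝ) * P⁻¹ ^ (k + 1)) (P / (P - 1) ^ 2) := by
  have hr : ‖P⁻¹‖ < 1 := by
    rw [Real.norm_eq_abs, abs_of_pos (by positivity)]; exact inv_lt_one_of_one_lt₀ hP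
  have h := (hasSum_nat_add_iff' (f := fun n : ℕ => (n : ℝ) * P⁻¹ ^ n) 1).2
    (hasSum_coe_mul_geometric_of_norm_lt_one hr)
  have hP1 : P - 1 ≠ 0 := by linarith
  rwa [sum_range_one, Nat.cast_zero, zero_mul, sub_zero,
    show P⁻¹ / (1 - P⁻¹) ^ 2 = P / (P - 1) ^ 2 by field_simp] at h

lemma sum_range_succ_mul_eq_sub (c : ℕ → ℝ) (n : ℕ) :
    ∑ k ∈ range n, ((k + 1 : ℕ) : ℝ) * c k =
      ((n + 1 : ℕ) : ℝ) * ∑ k ∈ range n, c k -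
        ∑ j ∈ range n, ∑ k ∈ range (j + 1), c k := by
  induction n with
  | zero => simp
  | succ n ih =>
    simp only [sum_range_succ _ n, ih]
    push_cast
    ring

lemma hasSum_sum_range_succ_of_hasSum_succ_mul {c : ℕ → ℝ} {x : ℝ}
    (hx : HasSum (fun k => ((k + 1 : ℕ) : ℝ) * c k) x)
    (hc : Tendsto (fun n => ((n + 1 : ℕ) : ℝ) * ∑ k ∈ range n, c k) atTop (𝓝 0))
    (hsum : Summable fun j => ∑ k ∈ range (j + 1), c k) :
    HasSum (fun j => ∑ k ∈ range (j + 1), c k) (-x) := by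
  rw [hsum.hasSum_iff_tendsto_nat]
  have hsub := hc.sub hx.tendsto_sum_nat
  rw [zero_sub] at hsub
  refine hsub.congr fun n => ?_
  rw [sum_range_succ_mul_eq_sub]
  ring

lemma pow_mul_sum_range_inv_pow_eq_intCast {p : ℤ} (hp : p ≠ 0) (b : ℕ → ℤ) (n : ℕ) :
    (p : ℝ) ^ n * ∑ k ∈ range n, (b k : ℝ) * (p : ℝ)⁻¹ ^ (k + 1) =
      ((∑ k ∈ range n, b k * p ^ (n - 1 - k) : ℤ) : ℝ) := by
  push_cast
  rw [mul_sum]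
  refine sum_congr rfl fun k hk => ?_
  obtain ⟨j, rfl⟩ : ∃ j, n = j + k + 1 := ⟨n - 1 - k, by have := mem_range.1 hk; omega⟩
  rw [show j + k + 1 - 1 - k = j by omega, inv_pow]
  field_simp
  ring

lemma abs_sum_range_lt_of_mem_seqB {p m : ℤ} (hp : 1 < p) (hm : m < 2 * p - 1) {b : ℕ → ℤ}
    (hb : b ∈ seqB p m) (n : ℕ) :
    |∑ k ∈ range n, (b k : ℝ) * (p : ℝ)⁻¹ ^ (k + 1)| < 2 * (p : ℝ)⁻¹ ^ n := by
  have hP : (1 : ℝ) < p := by exact_mod_cast hp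
  have hP1 : (p : ℝ) - 1 ≠ 0 := by linarith
  have hstep : ∀ k, dist (∑ i ∈ range k, (b i : ℝ) * (p : ℝ)⁻¹ ^ (i + 1))
      (∑ i ∈ range (k + 1), (b i : ℝ) * (p : ℝ)⁻¹ ^ (i + 1)) ≤
        ((m - 1) / p) * (p : ℝ)⁻¹ ^ k := by
    intro k
    have hbk : |(b k : ℝ)| ≤ m - 1 := by exact_mod_cast hb.1 k
    rw [dist_comm, Real.dist_eq, sum_range_succ, add_sub_cancel_left, abs_mul,
      abs_of_pos (by positivity : (0 : ℝ) < (p : ℝ)⁻¹ ^ (k + 1)), div_eq_mul_inv, mul_assoc,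
      ← pow_succ']
    gcongr
  have h := dist_le_of_le_geometric_of_tendsto _ _ (inv_lt_one_of_one_lt₀ hP) hstep
    hb.2.tendsto_sum_nat n
  rw [Real.dist_0_eq_abs] at h
  refine h.trans_lt ?_
  rw [show ((m - 1) / p : ℝ) * (p : ℝ)⁻¹ ^ n / (1 - (p : ℝ)⁻¹) =
    (m - 1) / (p - 1) * (p : ℝ)⁻¹ ^ n by field_simp]
  gcongr
  rw [div_lt_iff₀ (by linarith)]
  have : (m : ℝ) < 2 * p - 1 := by exact_mod_cast hm
  linarith

lemma abs_sum_range_le_of_mem_seqB {p m : ℤ} (hp : 1 < p) (hm : m < 2 * p - 1) {b : ℕ → ℤ}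
    (hb : b ∈ seqB p m) (n : ℕ) :
    |∑ k ∈ range n, (b k : ℝ) * (p : ℝ)⁻¹ ^ (k + 1)| ≤ (p : ℝ)⁻¹ ^ n := by
  have hP : (1 : ℝ) < p := by exact_mod_cast hp
  have hpn : (0 : ℝ) < (p : ℝ) ^ n := pow_pos (by linarith) n
  have hN := pow_mul_sum_range_inv_pow_eq_intCast (show p ≠ 0 by omega) b n
  set N := ∑ k ∈ range n, b k * p ^ (n - 1 - k)
  have hN2 : |(N : ℝ)| < 2 := by
    rw [← hN, abs_mul, abs_of_pos hpn, ← lt_div_iff₀' hpn, div_eq_mul_inv, ← inv_pow]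
    exact abs_sum_range_lt_of_mem_seqB hp hm hb n
  have hN1 : |(N : ℝ)| ≤ 1 := by
    have : |N| < 2 := by exact_mod_cast hN2
    exact_mod_cast (by omega : |N| ≤ 1)
  rw [← mul_le_mul_iff_of_pos_left hpn, ← abs_of_pos hpn, ← abs_mul, abs_of_pos hpn, hN,
    inv_pow, mul_inv_cancel₀ hpn.ne']
  exact hN1

lemma one_div_sub_one_mem_setQ' {p m : ℤ} (hp : 1 < p) (hpm : p ≤ m) :
    (1 : ℝ) / ((p : ℝ) - 1) ∈ setQ' p m := by
  have hP : (1 : ℝ) < p := by exact_mod_cast hp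
  have hP1 : (p : ℝ) - 1 ≠ 0 := by linarith
  let b : ℕ → ℤ := fun k => if k = 0 then -1 else p - 1
  refine ⟨b, ⟨fun k => ?_, ?_⟩, ?_⟩
  · rcases k with _ | k
    · simp only [b, if_pos, abs_neg, abs_one]; omega
    · simp only [b, Nat.succ_ne_zero, if_false, abs_of_nonneg (by omega : 0 ≤ p - 1)]; omega
  · have h := ((hasSum_inv_pow_succ hP).mul_left ((p : ℝ) - 1)).sub (hasSum_ite_eq 0 (1 : ℝ))
    rw [mul_inv_cancel₀ hP1, sub_self] at h
    refine h.congr_fun fun k => ?_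
    rcases k with _ | k
    · simp only [b, if_pos]; push_cast; field_simp; ring
    · simp only [b, Nat.succ_ne_zero, if_false]; push_cast; ring
  · have h := ((hasSum_succ_mul_inv_pow_succ hP).mul_left ((p : ℝ) - 1)).sub
      (hasSum_ite_eq 0 (1 : ℝ))
    rw [show ((p : ℝ) - 1) * (p / (p - 1) ^ 2) - 1 = 1 / (p - 1) by field_simp; ring] at h
    refine h.congr_fun fun k => ?_
    rcases k with _ | k
    · simp only [b, if_pos]; push_cast; field_simp; ring
    · simp only [b, Nat.succ_ne_zero, if_false]; push_cast; ring

lemma neg_mem_setQ' {p m : ℤ} {x : ℝ} (hx : x ∈ setQ' p m) : -x ∈ setQ' p m := by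
  obtain ⟨b, ⟨hbm, hb0⟩, hbx⟩ := hx
  refine ⟨-b, ⟨fun k => ?_, ?_⟩, ?_⟩
  · simpa using hbm k
  · simpa using hb0.neg
  · simpa using hbx.neg

lemma abs_le_of_mem_setQ' {p m : ℤ} (hp : 1 < p) (hm : m < 2 * p - 1) {x : ℝ}
    (hx : x ∈ setQ' p m) : |x| ≤ 1 / ((p : ℝ) - 1) := by
  obtain ⟨b, hb, hbx⟩ := hx
  have hP : (1 : ℝ) < p := by exact_mod_cast hp
  have hS := abs_sum_range_le_of_mem_seqB hp hm hb
  have hweighted : Tendsto (fun n => ((n + 1 : ℕ) : ℝ) *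
      ∑ k ∈ range n, (b k : ℝ) * (p : ℝ)⁻¹ ^ (k + 1)) atTop (𝓝 0) := by
    have hlim :=
      ((hasSum_succ_mul_inv_pow_succ hP).summable.tendsto_atTop_zero).const_mul (p : ℝ)
    rw [mul_zero] at hlim
    refine squeeze_zero_norm (fun n => ?_) hlim
    have hP0 : (p : ℝ) ≠ 0 := by positivity
    calc ‖((n + 1 : ℕ) : ℝ) * ∑ k ∈ range n, (b k : ℝ) * (p : ℝ)⁻¹ ^ (k + 1)‖
        ≤ ((n + 1 : ℕ) : ℝ) * (p : ℝ)⁻¹ ^ n := by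
          rw [Real.norm_eq_abs, abs_mul, Nat.abs_cast]; gcongr; exact hS n
      _ = p * (((n + 1 : ℕ) : ℝ) * (p : ℝ)⁻¹ ^ (n + 1)) := by
          rw [pow_succ]; field_simp
  have h := hasSum_sum_range_succ_of_hasSum_succ_mul
    (hbx.congr_fun fun k => (mul_assoc _ _ _).symm) hweighted
    ((hasSum_inv_pow_succ hP).summable.of_norm_bounded fun j => hS (j + 1))
  rw [one_div, ← abs_neg]
  exact h.norm_le_of_bounded (hasSum_inv_pow_succ hP) fun j => hS (j + 1)

theorem stmt_8 (p m : ℤ) (hp : 2 ≤ p) (hm1 : p + 1 < m) (hm2 : m < 2 * p - 1) :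
    (1 : ℝ) / ((p : ℝ) - 1) ∈ setQ' p m ∧
    -((1 : ℝ) / ((p : ℝ) - 1)) ∈ setQ' p m ∧
    ∀ x ∈ setQ' p m, |x| ≤ (1 : ℝ) / ((p : ℝ) - 1) := by
  have hmax : (1 : ℝ) / ((p : ℝ) - 1) ∈ setQ' p m := one_div_sub_one_mem_setQ' hp (by omega)
  exact ⟨hmax, neg_mem_setQ' hmax, fun x hx => abs_le_of_mem_setQ' hp hm2 hx⟩
end

section
/- Let p, q, m, n be integers with p ≥ 2, |q| = 2, p + 1 < m < 2p − 1, and 2n − 1 ≥ |q|, and let a be any real number. Then G_i(T) ∩ G_{i+1}(T) ≠ ∅ for every i ∈ {0, …, m−2}, and S_{i,j}(T) ∩ S_{i,j+1}(T) ≠ ∅ for every i ∈ {0, …, m−1} and every j ∈ {0, …, n−2}. -/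
/-!
Both claims follow once we have points `x, y ∈ T` with `x - y = (1, 0)`, resp. `x - y = (0, 1)`:
then `A⁻¹(x + (i, j)) = A⁻¹(y + (i + 1, j))`, resp. `A⁻¹(y + (i, j + 1))`, lies in both pieces.
Such a difference is `∑ A^{-(k+1)} (e_k, f_k)` with integer digit differences `|e_k| ≤ m - 1`,
`|f_k| ≤ n - 1`. As `A⁻¹` is lower triangular with diagonal `1/p, 1/q`, the direction `(1, 0)`
is reached when `F(t) = ∑ e_k t^{k+1}` equals `1` at both `t = 1/p` and `t = 1/q`. Writing
`q = 2ε`, the series `F(t) = 2pt - (p - ε)t/(1 - εt)` works because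
`1 - F(t) = (pt - 1)(2εt - 1)/(1 - εt)`, and its digits `p + ε, -(p - ε)ε^k` are bounded by
`p + 1 ≤ m - 1`. For `(0, 1)` only `t = 1/q` matters, and `f_k = ε^{k+1}` gives
`∑ 2^{-(k+1)} = 1`.
-/

open Matrix

/-- The expanding matrix with rows `(p, 0)` and `(-a, q)`. -/
noncomputable def matA (p q : ℤ) (a : ℝ) : Matrix (Fin 2) (Fin 2) ℝ :=
  !![(p : ℝ), 0; -a, (q : ℝ)]

/-- The product digit set `{0,…,m-1} × {0,…,n-1}` viewed inside `ℝ²`. -/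
def digitSet (m n : ℤ) : Set (Fin 2 → ℝ) :=
  {v | ∃ i j : ℤ, 0 ≤ i ∧ i ≤ m - 1 ∧ 0 ≤ j ∧ j ≤ n - 1 ∧ v = ![(i : ℝ), (j : ℝ)]}

/-- `T(A, D) = { ∑_{k≥1} A^{-k} d_k : d_k ∈ D }`. -/
noncomputable def selfAffineSet (A : Matrix (Fin 2) (Fin 2) ℝ) (D : Set (Fin 2 → ℝ)) :
    Set (Fin 2 → ℝ) :=
  {x | ∃ d : ℕ → (Fin 2 → ℝ), (∀ k, d k ∈ D) ∧
    HasSum (fun k => (A⁻¹ ^ (k + 1)).mulVec (d k)) x}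

/-- `S_{i,j}(T) = A⁻¹(T + (i, j))`. -/
noncomputable def Sij (A : Matrix (Fin 2) (Fin 2) ℝ) (T : Set (Fin 2 → ℝ)) (i j : ℤ) :
    Set (Fin 2 → ℝ) :=
  (fun x => A⁻¹.mulVec (x + ![(i : ℝ), (j : ℝ)])) '' T

/-- `G_i(T) = ⋃_{j=0}^{n-1} S_{i,j}(T)`. -/
noncomputable def Gi (A : Matrix (Fin 2) (Fin 2) ℝ) (T : Set (Fin 2 → ℝ)) (n i : ℤ) :
    Set (Fin 2 → ℝ) :=
  ⋃ j ∈ Set.Icc (0 : ℤ) (n - 1), Sij A T i j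

lemma summable_pow_succ_mul_of_abs_le {t C : ℝ} (ht : |t| < 1) {f : ℕ → ℝ}
    (hf : ∀ k, |f k| ≤ C) : Summable (fun k => t ^ (k + 1) * f k) := by
  refine .of_norm_bounded
    ((summable_geometric_of_lt_one (abs_nonneg t) ht).mul_left (|t| * C)) fun k => ?_
  rw [Real.norm_eq_abs, abs_mul, abs_pow, pow_succ]
  calc |t| ^ k * |t| * |f k| ≤ |t| ^ k * |t| * C := by gcongr; exact hf k
    _ = |t| * C * |t| ^ k := by ring

lemma abs_intCast_inv_lt_one {p : ℤ} (hp : 1 < |p|) : |(p : ℝ)⁻¹| < 1 := by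
  rw [abs_inv, ← Int.cast_abs]
  exact inv_lt_one_of_one_lt₀ (by exact_mod_cast hp)

section InversePowers

variable {p q : ℤ} (a : ℝ)

lemma matA_inv (hp : p ≠ 0) (hq : q ≠ 0) :
    (matA p q a)⁻¹ = !![(p : ℝ)⁻¹, 0; a / (p * q), (q : ℝ)⁻¹] := by
  have hp' : (p : ℝ) ≠ 0 := by exact_mod_cast hp
  have hq' : (q : ℝ) ≠ 0 := by exact_mod_cast hq
  apply inv_eq_right_inv
  ext i j
  fin_cases i <;> fin_cases j <;> simp [matA, mul_apply, Fin.sum_univ_two, hp', hq']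
  field_simp
  ring

lemma matA_inv_pow_mulVec (hp : p ≠ 0) (hq : q ≠ 0) (hpq : p ≠ q) (k : ℕ) (x y : ℝ) :
    (matA p q a)⁻¹ ^ k *ᵥ ![x, y] =
      ![(p : ℝ)⁻¹ ^ k * x,
        a / (q - p) * ((p : ℝ)⁻¹ ^ k - (q : ℝ)⁻¹ ^ k) * x + (q : ℝ)⁻¹ ^ k * y] := by
  have hp' : (p : ℝ) ≠ 0 := by exact_mod_cast hp
  have hq' : (q : ℝ) ≠ 0 := by exact_mod_cast hq
  have hpq' : (q : ℝ) - p ≠ 0 := sub_ne_zero.mpr (by exact_mod_cast hpq.symm)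
  induction k generalizing x y with
  | zero => simp
  | succ k ih =>
    rw [pow_succ', ← mulVec_mulVec, ih, matA_inv a hp hq]
    ext i
    fin_cases i
    · simp [mulVec, dotProduct, Fin.sum_univ_two, pow_succ]
      ring
    · simp [mulVec, dotProduct, Fin.sum_univ_two, pow_succ]
      field_simp
      ring

lemma hasSum_matA_inv_pow_mulVec (hp : p ≠ 0) (hq : q ≠ 0) (hpq : p ≠ q) {e f : ℕ → ℝ}
    {R S U : ℝ} (hR : HasSum (fun k => (p : ℝ)⁻¹ ^ (k + 1) * e k) R)
    (hS : HasSum (fun k => (q : ℝ)⁻¹ ^ (k + 1) * e k) S)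
    (hU : HasSum (fun k => (q : ℝ)⁻¹ ^ (k + 1) * f k) U) :
    HasSum (fun k => (matA p q a)⁻¹ ^ (k + 1) *ᵥ ![e k, f k])
      ![R, a / (q - p) * (R - S) + U] := by
  simp_rw [matA_inv_pow_mulVec a hp hq hpq, Pi.hasSum, Fin.forall_fin_two]
  refine ⟨by simpa using hR, ?_⟩
  simp only [cons_val_one, cons_val_zero]
  simpa only [mul_sub, sub_mul, mul_assoc] using ((hR.sub hS).mul_left (a / (q - p))).add hU

end InversePowers

section SelfAffineSet

variable {p q : ℤ} {a : ℝ} {m n : ℤ}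

lemma summable_matA_inv_pow_mulVec (hp : 1 < |p|) (hq : 1 < |q|) (hpq : p ≠ q) {e f : ℕ → ℝ}
    {C : ℝ} (he : ∀ k, |e k| ≤ C) (hf : ∀ k, |f k| ≤ C) :
    Summable (fun k => (matA p q a)⁻¹ ^ (k + 1) *ᵥ ![e k, f k]) :=
  (hasSum_matA_inv_pow_mulVec a (abs_pos.mp (one_pos.trans hp)) (abs_pos.mp (one_pos.trans hq))
    hpq
    (summable_pow_succ_mul_of_abs_le (abs_intCast_inv_lt_one hp) he).hasSum
    (summable_pow_succ_mul_of_abs_le (abs_intCast_inv_lt_one hq) he).hasSum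
    (summable_pow_succ_mul_of_abs_le (abs_intCast_inv_lt_one hq) hf).hasSum).summable

lemma exists_mem_selfAffineSet_eq_add (hp : 1 < |p|) (hq : 1 < |q|) (hpq : p ≠ q)
    {e f : ℕ → ℤ} (he : ∀ k, |e k| ≤ m - 1) (hf : ∀ k, |f k| ≤ n - 1) {v : Fin 2 → ℝ}
    (hv : HasSum (fun k => (matA p q a)⁻¹ ^ (k + 1) *ᵥ ![(e k : ℝ), f k]) v) :
    ∃ x ∈ selfAffineSet (matA p q a) (digitSet m n),
      ∃ y ∈ selfAffineSet (matA p q a) (digitSet m n), x = y + v := by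
  set d : ℕ → Fin 2 → ℝ := fun k => ![(max (-e k) 0 : ℤ), (max (-f k) 0 : ℤ)]
  have hd : Summable (fun k => (matA p q a)⁻¹ ^ (k + 1) *ᵥ d k) := by
    refine summable_matA_inv_pow_mulVec (C := max m n) hp hq hpq (fun k => ?_) (fun k => ?_) <;>
    · specialize he k; specialize hf k
      rw [abs_le] at he hf
      exact_mod_cast abs_le.mpr ⟨by omega, by omega⟩
  refine ⟨_, ⟨fun k => d k + ![(e k : ℝ), f k], fun k => ?_, ?_⟩, _,
    ⟨d, fun k => ?_, hd.hasSum⟩, rfl⟩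
  · specialize he k; specialize hf k
    rw [abs_le] at he hf
    refine ⟨max (e k) 0, max (f k) 0, by omega, by omega, by omega, by omega, ?_⟩
    ext i
    fin_cases i <;> simp [d] <;> norm_cast <;> omega
  · simpa only [mulVec_add] using hd.hasSum.add hv
  · specialize he k; specialize hf k
    rw [abs_le] at he hf
    exact ⟨max (-e k) 0, max (-f k) 0, by omega, by omega, by omega, by omega, rfl⟩

lemma exists_mem_selfAffineSet_eq_add_single_fst (hp : 1 < |p|) (hq : 1 < |q|) (hpq : p ≠ q)
    (hn : 1 ≤ n) {e : ℕ → ℤ} (he : ∀ k, |e k| ≤ m - 1)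
    (hep : HasSum (fun k => (p : ℝ)⁻¹ ^ (k + 1) * e k) 1)
    (heq : HasSum (fun k => (q : ℝ)⁻¹ ^ (k + 1) * e k) 1) :
    ∃ x ∈ selfAffineSet (matA p q a) (digitSet m n),
      ∃ y ∈ selfAffineSet (matA p q a) (digitSet m n), x = y + ![1, 0] := by
  refine exists_mem_selfAffineSet_eq_add hp hq hpq (f := 0) he (by simpa using hn) ?_
  simpa using hasSum_matA_inv_pow_mulVec a (abs_pos.mp (one_pos.trans hp))
    (abs_pos.mp (one_pos.trans hq)) hpq hep heq (f := 0) (U := 0) (by simp)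

lemma exists_mem_selfAffineSet_eq_add_single_snd (hp : 1 < |p|) (hq : 1 < |q|) (hpq : p ≠ q)
    (hm : 1 ≤ m) {f : ℕ → ℤ} (hf : ∀ k, |f k| ≤ n - 1)
    (hfq : HasSum (fun k => (q : ℝ)⁻¹ ^ (k + 1) * f k) 1) :
    ∃ x ∈ selfAffineSet (matA p q a) (digitSet m n),
      ∃ y ∈ selfAffineSet (matA p q a) (digitSet m n), x = y + ![0, 1] := by
  refine exists_mem_selfAffineSet_eq_add hp hq hpq (e := 0) (by simpa using hm) hf ?_
  simpa using hasSum_matA_inv_pow_mulVec a (abs_pos.mp (one_pos.trans hp))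
    (abs_pos.mp (one_pos.trans hq)) hpq (e := 0) (R := 0) (S := 0) (by simp) (by simp) hfq

end SelfAffineSet

section Pieces

variable {A : Matrix (Fin 2) (Fin 2) ℝ} {T : Set (Fin 2 → ℝ)} {x y : Fin 2 → ℝ}

lemma Sij_inter_nonempty_of_add_eq (hx : x ∈ T) (hy : y ∈ T) {i j i' j' : ℤ}
    (h : x + ![(i : ℝ), j] = y + ![(i' : ℝ), j']) : (Sij A T i j ∩ Sij A T i' j').Nonempty :=
  ⟨_, ⟨x, hx, rfl⟩, y, hy, congrArg (A⁻¹ *ᵥ ·) h.symm⟩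

lemma Sij_inter_Sij_add_one_left_nonempty (hx : x ∈ T) (hy : y ∈ T) (hxy : x = y + ![1, 0])
    (i j : ℤ) : (Sij A T i j ∩ Sij A T (i + 1) j).Nonempty := by
  refine Sij_inter_nonempty_of_add_eq hx hy ?_
  rw [hxy, add_assoc]
  congr 1
  ext k
  fin_cases k <;> simp [add_comm]

lemma Sij_inter_Sij_add_one_right_nonempty (hx : x ∈ T) (hy : y ∈ T) (hxy : x = y + ![0, 1])
    (i j : ℤ) : (Sij A T i j ∩ Sij A T i (j + 1)).Nonempty := by
  refine Sij_inter_nonempty_of_add_eq hx hy ?_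
  rw [hxy, add_assoc]
  congr 1
  ext k
  fin_cases k <;> simp [add_comm]

lemma Gi_inter_Gi_add_one_nonempty {n : ℤ} (hn : 1 ≤ n) (hx : x ∈ T) (hy : y ∈ T)
    (hxy : x = y + ![1, 0]) (i : ℤ) : (Gi A T n i ∩ Gi A T n (i + 1)).Nonempty :=
  have h0 : (0 : ℤ) ∈ Set.Icc 0 (n - 1) := ⟨le_rfl, by omega⟩
  (Sij_inter_Sij_add_one_left_nonempty hx hy hxy i 0).mono <|
    Set.inter_subset_inter (Set.subset_biUnion_of_mem h0) (Set.subset_biUnion_of_mem h0)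

end Pieces

def horizontalDigitDiff (p ε : ℤ) (k : ℕ) : ℤ :=
  (if k = 0 then 2 * p else 0) - (p - ε) * ε ^ k

lemma abs_horizontalDigitDiff_le {p ε : ℤ} (hε : |ε| = 1) (k : ℕ) :
    |horizontalDigitDiff p ε k| ≤ |p| + 1 := by
  rcases Nat.eq_zero_or_pos k with rfl | hk
  · simpa [horizontalDigitDiff, two_mul, add_sub_assoc, hε] using abs_add_le p ε
  · simpa [horizontalDigitDiff, hk.ne', abs_mul, abs_pow, hε] using abs_sub p ε

lemma hasSum_pow_succ_mul_horizontalDigitDiff {p ε : ℤ} {t : ℝ} (ht : |ε * t| < 1)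
    (hroot : (p * t - 1) * (2 * ε * t - 1) = 0) :
    HasSum (fun k => t ^ (k + 1) * horizontalDigitDiff p ε k) 1 := by
  have hne : 1 - ε * t ≠ 0 := by linarith [(abs_lt.mp ht).2]
  have hval : 2 * p * t - (p - ε) * t * (1 - ε * t)⁻¹ = 1 := by
    rw [sub_eq_iff_eq_add', ← sub_eq_iff_eq_add, eq_mul_inv_iff_mul_eq₀ hne]
    linear_combination -hroot
  have hterm : (fun k => t ^ (k + 1) * horizontalDigitDiff p ε k) =
      fun k => (if k = 0 then 2 * p * t else 0) - (p - ε) * t * (ε * t) ^ k := by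
    ext k
    split_ifs with hk <;> simp [horizontalDigitDiff, hk] <;> ring
  rw [hterm, ← hval]
  exact (hasSum_ite_eq 0 _).sub ((hasSum_geometric_of_abs_lt_one ht).mul_left _)

lemma hasSum_inv_pow_succ_mul_horizontalDigitDiff {p ε : ℤ} (hp : 1 < |p|) (hε : |ε| = 1) :
    HasSum (fun k => (p : ℝ)⁻¹ ^ (k + 1) * horizontalDigitDiff p ε k) 1 := by
  have hp0 : (p : ℝ) ≠ 0 := by exact_mod_cast abs_pos.mp (one_pos.trans hp)
  refine hasSum_pow_succ_mul_horizontalDigitDiff ?_ ?_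
  · rw [abs_mul, ← Int.cast_abs, hε, Int.cast_one, one_mul]
    exact abs_intCast_inv_lt_one hp
  · rw [mul_inv_cancel₀ hp0, sub_self, zero_mul]

lemma hasSum_inv_two_mul_pow_succ_mul_horizontalDigitDiff {p ε : ℤ} (hε : |ε| = 1) :
    HasSum (fun k => ((2 * ε : ℤ) : ℝ)⁻¹ ^ (k + 1) * horizontalDigitDiff p ε k) 1 := by
  have hε' : |(ε : ℝ)| = 1 := by exact_mod_cast hε
  have hq0 : (2 * ε : ℝ) ≠ 0 := by rw [← abs_pos, abs_mul, hε']; norm_num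
  refine hasSum_pow_succ_mul_horizontalDigitDiff ?_ ?_ <;> push_cast
  · rw [abs_mul, abs_inv, abs_mul, hε']
    norm_num
  · rw [mul_inv_cancel₀ hq0]
    ring

lemma hasSum_inv_two_mul_pow_succ_mul_pow_succ {ε : ℤ} (hε : |ε| = 1) :
    HasSum (fun k => ((2 * ε : ℤ) : ℝ)⁻¹ ^ (k + 1) * ((ε ^ (k + 1) : ℤ) : ℝ)) 1 := by
  have hε0 : (ε : ℝ) ≠ 0 := by exact_mod_cast abs_pos.mp (hε ▸ one_pos)
  have h : (2 * (ε : ℝ))⁻¹ * ε = 2⁻¹ := by field_simp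
  push_cast
  simp_rw [← mul_pow, h]
  simpa [pow_succ'] using hasSum_geometric_two.mul_left 2⁻¹

lemma exists_eq_two_mul_of_abs_eq_two {q : ℤ} (hq : |q| = 2) : ∃ ε : ℤ, |ε| = 1 ∧ q = 2 * ε := by
  rcases abs_eq two_pos.le |>.mp hq with rfl | rfl
  exacts [⟨1, rfl, rfl⟩, ⟨-1, rfl, rfl⟩]

theorem stmt_12_general (p q m n : ℤ) (a : ℝ) (hq : |q| = 2)
    (hm1 : p + 1 < m) (hm2 : m < 2 * p - 1) (hn : |q| ≤ 2 * n - 1) :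
    (∀ i ∈ Set.Icc (0 : ℤ) (m - 2),
      (Gi (matA p q a) (selfAffineSet (matA p q a) (digitSet m n)) n i ∩
        Gi (matA p q a) (selfAffineSet (matA p q a) (digitSet m n)) n (i + 1)).Nonempty) ∧
    (∀ i ∈ Set.Icc (0 : ℤ) (m - 1), ∀ j ∈ Set.Icc (0 : ℤ) (n - 2),
      (Sij (matA p q a) (selfAffineSet (matA p q a) (digitSet m n)) i j ∩
        Sij (matA p q a) (selfAffineSet (matA p q a) (digitSet m n)) i (j + 1)).Nonempty) := by
  obtain ⟨ε, hε, rfl⟩ := exists_eq_two_mul_of_abs_eq_two hq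
  rw [hq] at hn
  have hpabs : |p| = p := abs_of_pos (by omega)
  have hp1 : 1 < |p| := by omega
  have hq1 : 1 < |2 * ε| := by rw [abs_mul, hε]; norm_num
  have hpq : p ≠ 2 * ε := by rw [abs_eq zero_le_one] at hε; omega
  obtain ⟨x, hx, y, hy, hxy⟩ := exists_mem_selfAffineSet_eq_add_single_fst (a := a) (m := m)
    (n := n) hp1 hq1 hpq (by omega) (fun k => (abs_horizontalDigitDiff_le hε k).trans (by omega))
    (hasSum_inv_pow_succ_mul_horizontalDigitDiff hp1 hε)
    (hasSum_inv_two_mul_pow_succ_mul_horizontalDigitDiff hε)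
  obtain ⟨x', hx', y', hy', hxy'⟩ := exists_mem_selfAffineSet_eq_add_single_snd (a := a)
    (m := m) (n := n) hp1 hq1 hpq (by omega) (fun k => by simp [abs_pow, hε]; omega)
    (hasSum_inv_two_mul_pow_succ_mul_pow_succ hε)
  exact ⟨fun i _ => Gi_inter_Gi_add_one_nonempty (by omega) hx hy hxy i,
    fun i _ j _ => Sij_inter_Sij_add_one_right_nonempty hx' hy' hxy' i j⟩

theorem stmt_12 (p q m n : ℤ) (a : ℝ) (hp : 2 ≤ p) (hq : |q| = 2)
    (hm1 : p + 1 < m) (hm2 : m < 2 * p - 1) (hn : |q| ≤ 2 * n - 1) :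
    (∀ i ∈ Set.Icc (0 : ℤ) (m - 2),
      (Gi (matA p q a) (selfAffineSet (matA p q a) (digitSet m n)) n i ∩
        Gi (matA p q a) (selfAffineSet (matA p q a) (digitSet m n)) n (i + 1)).Nonempty) ∧
    (∀ i ∈ Set.Icc (0 : ℤ) (m - 1), ∀ j ∈ Set.Icc (0 : ℤ) (n - 2),
      (Sij (matA p q a) (selfAffineSet (matA p q a) (digitSet m n)) i j ∩
        Sij (matA p q a) (selfAffineSet (matA p q a) (digitSet m n)) i (j + 1)).Nonempty) :=
  stmt_12_general p q m n a hq hm1 hm2 hn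
end
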